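/- arXiv:1409.2953 — 2 statements merged into one kernel-verified Lean document; each statement's English description precedes it below -/
import Mathlib

section
/- Let f : (0,∞) × ℝ → ℝ be a smooth compactly supported function, and let φ : [0,∞) → [0,1] be a smooth cutoff with φ(r)=1 for r ≤ 1/2 and φ(r)=0 for r ≥ 1. Then ∫∫ f(r,z)^4 φ(r) r^3 dr dz ≤ C ‖f‖_{L²} (‖f‖_{L²} + ‖∂_r f‖_{L²}) ‖∂_z f‖_{L²} · ‖f‖_{L²}, where all norms are taken in L²((0,∞)×ℝ, r dr dz), for a universal constant C. -/
open MeasureTheory Real Set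

lemma aux_vanish (u : ℝ → ℝ) {R : ℝ} (hR : tsupport u ⊆ Metric.closedBall 0 R)
    {y : ℝ} (hy : R < |y|) : u y = 0 := by
  apply image_eq_zero_of_notMem_tsupport
  intro hmem
  have h := hR hmem
  simp only [Metric.mem_closedBall, Real.dist_eq, sub_zero] at h
  linarith

lemma aux_ftc (u : ℝ → ℝ) (hu : ContDiff ℝ (⊤ : ℕ∞) u) (hc : HasCompactSupport u) (x : ℝ) :
    u x ≤ ∫ y, |deriv u y| := by
  obtain ⟨R, hR⟩ := hc.isBounded.subset_closedBall 0
  have habs : ∀ y : ℝ, |x| + |R| + 1 ≤ |y| → u y = 0 := fun y hy =>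
    aux_vanish u hR (by nlinarith [abs_nonneg x, le_abs_self R])
  set a := -(|x| + |R| + 1) with ha_def
  have ha0 : u a = 0 := habs a (by rw [ha_def, abs_neg]; exact le_abs_self _)
  have hax : a ≤ x := by rw [ha_def]; nlinarith [neg_abs_le x, abs_nonneg R]
  have hdc : Continuous (deriv u) := hu.continuous_deriv (by simp)
  have hsub : u x - u a = ∫ y in a..x, deriv u y :=
    (intervalIntegral.integral_deriv_eq_sub
      (fun y _ => (hu.differentiable (by simp)).differentiableAt)
      (hdc.intervalIntegrable a x)).symm
  have hint : Integrable (fun y => |deriv u y|) := by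
    have : HasCompactSupport (fun y => |deriv u y|) := by
      apply HasCompactSupport.mono hc.deriv
      intro y hy
      simp only [Function.mem_support, ne_eq, abs_eq_zero] at hy ⊢
      exact hy
    exact (hdc.abs).integrable_of_hasCompactSupport this
  calc u x = ∫ y in a..x, deriv u y := by rw [← hsub, ha0]; ring
    _ ≤ |∫ y in a..x, deriv u y| := le_abs_self _
    _ ≤ ∫ y in a..x, |deriv u y| := intervalIntegral.abs_integral_le_integral_abs hax
    _ = ∫ y in Ioc a x, |deriv u y| := intervalIntegral.integral_of_le hax
    _ ≤ ∫ y, |deriv u y| := setIntegral_le_integral hint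
        (Filter.Eventually.of_forall fun y => abs_nonneg _)

lemma aux_ftc_right (u : ℝ → ℝ) (hu : ContDiff ℝ (⊤ : ℕ∞) u) (hc : HasCompactSupport u)
    {x : ℝ} (hx : 0 < x) : u x ≤ ∫ y in Ioi (0:ℝ), |deriv u y| := by
  obtain ⟨R, hR⟩ := hc.isBounded.subset_closedBall 0
  set b := |x| + |R| + 1 with hb_def
  have hb0 : u b = 0 := aux_vanish u hR (by
    rw [hb_def]
    have h1 : R < |x| + |R| + 1 := by nlinarith [abs_nonneg x, le_abs_self R]
    exact lt_of_lt_of_le h1 (le_abs_self _))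
  have hxb : x ≤ b := by rw [hb_def]; nlinarith [le_abs_self x, abs_nonneg R]
  have hdc : Continuous (deriv u) := hu.continuous_deriv (by simp)
  have hsub : u b - u x = ∫ y in x..b, deriv u y :=
    (intervalIntegral.integral_deriv_eq_sub
      (fun y _ => (hu.differentiable (by simp)).differentiableAt)
      (hdc.intervalIntegrable x b)).symm
  have hint : IntegrableOn (fun y => |deriv u y|) (Ioi (0:ℝ)) := by
    have h1 : HasCompactSupport (fun y => |deriv u y|) := by
      apply HasCompactSupport.mono hc.deriv
      intro y hy
      simp only [Function.mem_support, ne_eq, abs_eq_zero] at hy ⊢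
      exact hy
    exact ((hdc.abs).integrable_of_hasCompactSupport h1).integrableOn
  calc u x = -∫ y in x..b, deriv u y := by rw [← hsub, hb0]; ring
    _ ≤ |∫ y in x..b, deriv u y| := neg_le_abs _
    _ ≤ ∫ y in x..b, |deriv u y| := intervalIntegral.abs_integral_le_integral_abs hxb
    _ = ∫ y in Ioc x b, |deriv u y| := intervalIntegral.integral_of_le hxb
    _ ≤ ∫ y in Ioi (0:ℝ), |deriv u y| := by
        apply setIntegral_mono_set hint
        · exact Filter.Eventually.of_forall fun y => abs_nonneg _
        · exact HasSubset.Subset.eventuallyLE (fun y hy => lt_trans hx hy.1)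

lemma aux_cs {α : Type*} [MeasurableSpace α] {μ : Measure α} (f g : α → ℝ)
    (hf : MemLp f 2 μ) (hg : MemLp g 2 μ) (hf0 : ∀ x, 0 ≤ f x) (hg0 : ∀ x, 0 ≤ g x) :
    ∫ x, f x * g x ∂μ ≤ Real.sqrt (∫ x, f x ^ 2 ∂μ) * Real.sqrt (∫ x, g x ^ 2 ∂μ) := by
  have hpq : Real.HolderConjugate 2 2 := Real.holderConjugate_iff.mpr ⟨by norm_num, by norm_num⟩
  have h2 : ENNReal.ofReal (2:ℝ) = 2 := by simp [ENNReal.ofReal_ofNat]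
  have h := MeasureTheory.integral_mul_le_Lp_mul_Lq_of_nonneg hpq
    (Filter.Eventually.of_forall hf0) (Filter.Eventually.of_forall hg0)
    (h2 ▸ hf) (h2 ▸ hg)
  have e1 : ∀ (u : α → ℝ), (∀ x, 0 ≤ u x) → (∫ x, u x ^ (2:ℝ) ∂μ) ^ ((1:ℝ)/2)
      = Real.sqrt (∫ x, u x ^ 2 ∂μ) := by
    intro u hu
    rw [Real.sqrt_eq_rpow]
    congr 1
    refine integral_congr_ae (Filter.Eventually.of_forall fun x => ?_)
    simp [Real.rpow_natCast]
  rw [e1 f hf0, e1 g hg0] at h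
  exact h

set_option maxHeartbeats 2000000 in
/-- Weighted anisotropic Ladyzhenskaya-type inequality (Lemma 2.1). -/
theorem stmt_0 :
    ∃ C : ℝ, 0 < C ∧
    ∀ (f : ℝ × ℝ → ℝ) (φ : ℝ → ℝ),
      ContDiff ℝ (⊤ : ℕ∞) f → HasCompactSupport f →
      ContDiff ℝ (⊤ : ℕ∞) φ → (∀ r, φ r ∈ Set.Icc (0:ℝ) 1) →
      (∀ r, r ≤ (1:ℝ)/2 → φ r = 1) → (∀ r, (1:ℝ) ≤ r → φ r = 0) →
      (∫ r in Set.Ioi (0:ℝ), ∫ z : ℝ, (f (r, z))^4 * φ r * r^3)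
        ≤ C * (∫ r in Set.Ioi (0:ℝ), ∫ z : ℝ, (f (r, z))^2 * r).sqrt
            * ((∫ r in Set.Ioi (0:ℝ), ∫ z : ℝ, (f (r, z))^2 * r).sqrt
                + (∫ r in Set.Ioi (0:ℝ), ∫ z : ℝ, (fderiv ℝ f (r, z) (1, 0))^2 * r).sqrt)
            * (∫ r in Set.Ioi (0:ℝ), ∫ z : ℝ, (fderiv ℝ f (r, z) (0, 1))^2 * r).sqrt
            * (∫ r in Set.Ioi (0:ℝ), ∫ z : ℝ, (f (r, z))^2 * r).sqrt := by
  refine ⟨8, by norm_num, ?_⟩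
  intro f φ hf hfc hφ hφ01 hφh hφ1
  classical
  set μ1 : Measure ℝ := volume.restrict (Ioi 0) with hμ1
  set ν : Measure (ℝ × ℝ) := μ1.prod volume with hν
  set fr : ℝ × ℝ → ℝ := fun p => fderiv ℝ f p (1, 0) with hfr_def
  set fz : ℝ × ℝ → ℝ := fun p => fderiv ℝ f p (0, 1) with hfz_def
  have hfcont : Continuous f := hf.continuous
  have hfr_cont : Continuous fr :=
    (ContinuousLinearMap.apply ℝ ℝ ((1:ℝ), (0:ℝ))).continuous.comp (hf.continuous_fderiv (by simp))
  have hfz_cont : Continuous fz :=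
    (ContinuousLinearMap.apply ℝ ℝ ((0:ℝ), (1:ℝ))).continuous.comp (hf.continuous_fderiv (by simp))
  obtain ⟨R, hR⟩ := hfc.isBounded.subset_closedBall 0
  -- vanishing facts
  have hnotin : ∀ p : ℝ × ℝ, R < |p.1| ∨ R < |p.2| → p ∉ tsupport f := by
    intro p hp hmem
    have h := hR hmem
    simp only [Metric.mem_closedBall, dist_zero_right, Prod.norm_def, Real.norm_eq_abs] at h
    rcases hp with h1 | h1
    · exact absurd (le_trans (le_max_left _ _) h) (not_le.2 h1)
    · exact absurd (le_trans (le_max_right _ _) h) (not_le.2 h1)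
  have hf0 : ∀ p : ℝ × ℝ, R < |p.1| ∨ R < |p.2| → f p = 0 := fun p hp =>
    image_eq_zero_of_notMem_tsupport (hnotin p hp)
  have hfderiv0 : ∀ p : ℝ × ℝ, R < |p.1| ∨ R < |p.2| → fderiv ℝ f p = 0 := by
    intro p hp
    by_contra h
    exact hnotin p hp (support_fderiv_subset ℝ (Function.mem_support.2 h))
  -- integrability helpers
  have hν_restrict : ν = (volume : Measure (ℝ × ℝ)).restrict (Ioi 0 ×ˢ univ) := by
    rw [hν, hμ1]
    calc (volume.restrict (Ioi 0)).prod (volume : Measure ℝ)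
        = (volume.restrict (Ioi 0)).prod ((volume : Measure ℝ).restrict univ) := by
          rw [Measure.restrict_univ]
      _ = ((volume : Measure ℝ).prod volume).restrict (Ioi 0 ×ˢ univ) :=
          Measure.prod_restrict _ _
      _ = (volume : Measure (ℝ × ℝ)).restrict (Ioi 0 ×ˢ univ) := rfl
  have hInt : ∀ F : ℝ × ℝ → ℝ, Continuous F → HasCompactSupport F → Integrable F ν := by
    intro F hc hs
    rw [hν_restrict]
    exact (hc.integrable_of_hasCompactSupport hs).restrict
  have hMem : ∀ F : ℝ × ℝ → ℝ, Continuous F → HasCompactSupport F → MemLp F 2 ν := by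
    intro F hc hs
    rw [hν_restrict]
    exact (hc.memLp_of_hasCompactSupport hs).restrict _
  have hae : ∀ᵐ p ∂ν, 0 < p.1 := by
    rw [hν_restrict]
    exact (ae_restrict_mem (measurableSet_Ioi.prod MeasurableSet.univ)).mono fun p hp => hp.1
  have hsupp_of : ∀ g : ℝ × ℝ → ℝ, (∀ p : ℝ × ℝ, p ∉ tsupport f → g p = 0) →
      HasCompactSupport g := fun g hg => HasCompactSupport.intro hfc hg
  -- the fixed weight function
  set w : ℝ → ℝ := fun ρ => 2*ρ^2 / (1+ρ^2) with hw_def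
  have hw_cd : ContDiff ℝ (⊤ : ℕ∞) w := by
    apply ContDiff.div (by fun_prop) (by fun_prop)
    intro ρ; positivity
  have hw_deriv : ∀ ρ : ℝ, HasDerivAt w (4*ρ/((1+ρ^2)^2)) ρ := by
    intro ρ
    have h1 : HasDerivAt (fun x : ℝ => 2*x^2) (2*((2:ℕ)*ρ^1)) ρ :=
      (hasDerivAt_pow 2 ρ).const_mul 2
    have h2 : HasDerivAt (fun x : ℝ => 1+x^2) ((2:ℕ)*ρ^1) ρ :=
      (hasDerivAt_pow 2 ρ).const_add 1
    have h3 := h2.fun_inv (by positivity)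
    have h4 := h1.fun_mul h3
    have h5 : (fun x : ℝ => 2*x^2 * (1+x^2)⁻¹) = w := by
      funext x; simp only [hw_def]; rw [div_eq_mul_inv]
    rw [h5] at h4
    refine h4.congr_deriv ?_
    have hne : (1+ρ^2) ≠ 0 := by positivity
    field_simp
    ring
  have hw0 : ∀ ρ : ℝ, 0 ≤ w ρ := fun ρ => by rw [hw_def]; positivity
  have hw_le : ∀ ρ : ℝ, 0 < ρ → w ρ ≤ ρ := by
    intro ρ hρ
    rw [hw_def, div_le_iff₀ (by positivity)]
    nlinarith [mul_nonneg hρ.le (sq_nonneg (ρ-1))]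
  have hW_bound : ∀ ρ : ℝ, 0 < ρ → |4*ρ/((1+ρ^2)^2)| ≤ 4*ρ := by
    intro ρ hρ
    rw [abs_of_nonneg (by positivity)]
    apply div_le_self (by positivity)
    nlinarith [sq_nonneg ρ, sq_nonneg (ρ^2)]
  have hφw : ∀ r : ℝ, 0 < r → φ r * r^2 ≤ w r := by
    intro r hr
    rcases le_or_gt r 1 with h1 | h1
    · have h2 := (hφ01 r).2
      have h0 := (hφ01 r).1
      have h3 : φ r * r^2 ≤ r^2 := by nlinarith [sq_nonneg r]
      refine h3.trans ?_
      rw [hw_def, le_div_iff₀ (by positivity)]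
      have hr2 : r^2 ≤ 1 := by nlinarith
      nlinarith [mul_le_mul_of_nonneg_left hr2 (sq_nonneg r)]
    · rw [hφ1 r h1.le]
      simpa using hw0 r
  -- partial derivatives as 1D derivatives
  have hd_r : ∀ (x z : ℝ), HasDerivAt (fun x' => f (x', z)) (fr (x, z)) x := by
    intro x z
    have hg : HasDerivAt (fun x' : ℝ => ((x', z) : ℝ × ℝ)) (((1:ℝ), (0:ℝ)) : ℝ × ℝ) x :=
      (hasDerivAt_id x).prodMk (hasDerivAt_const x z)
    exact ((hf.differentiable (by simp) (x, z)).hasFDerivAt).comp_hasDerivAt x hg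
  have hd_z : ∀ (r y : ℝ), HasDerivAt (fun y' => f (r, y')) (fz (r, y)) y := by
    intro r y
    have hg : HasDerivAt (fun y' : ℝ => ((r, y') : ℝ × ℝ)) (((0:ℝ), (1:ℝ)) : ℝ × ℝ) y :=
      (hasDerivAt_const y r).prodMk (hasDerivAt_id y)
    exact ((hf.differentiable (by simp) (r, y)).hasFDerivAt).comp_hasDerivAt y hg
  have hzero_out : ∀ p : ℝ × ℝ, p ∉ tsupport f → f p = 0 ∧ fr p = 0 ∧ fz p = 0 := by
    intro p hp
    have h2 : fderiv ℝ f p = 0 := by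
      by_contra h
      exact hp (support_fderiv_subset ℝ (Function.mem_support.2 h))
    refine ⟨image_eq_zero_of_notMem_tsupport hp, ?_, ?_⟩ <;>
      simp [hfr_def, hfz_def, h2]
  set Q : ℝ → ℝ := fun z => ∫ ρ in Ioi (0:ℝ),
      (2* |f (ρ,z)| * |fr (ρ,z)| + 4*(f (ρ,z))^2)*ρ with hQ_def
  set H : ℝ → ℝ := fun r => ∫ z : ℝ, 2* |f (r,z)| * |fz (r,z)| with hH_def
  have key : ∀ r : ℝ, 0 < r → ∀ z : ℝ, (f (r,z))^4 * φ r * r^3 ≤ (H r * r) * Q z := by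
    intro r hr z
    -- z-direction bound
    have hu1 : ContDiff ℝ (⊤ : ℕ∞) (fun y => (f (r,y))^2) :=
      (hf.comp ((contDiff_const (c := r)).prodMk contDiff_id)).pow 2
    have hs1 : HasCompactSupport (fun y => (f (r,y))^2) := by
      apply HasCompactSupport.intro (isCompact_Icc (a := -R) (b := R))
      intro y hy
      have hy' : R < |y| := by
        rw [lt_abs]
        simp only [mem_Icc, not_and_or, not_le] at hy
        rcases hy with h | h
        · right; linarith
        · left; exact h
      simp [hf0 (r,y) (Or.inr hy')]
    have hab : (f (r,z))^2 ≤ H r := by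
      have h := aux_ftc _ hu1 hs1 z
      have hder : (deriv fun y => (f (r,y))^2) = fun y => 2 * f (r,y) * fz (r,y) := by
        funext y
        rw [((hd_z r y).fun_pow 2).deriv]
        push_cast; ring
      rw [hder] at h
      refine h.trans (le_of_eq ?_)
      simp only [hH_def]
      refine integral_congr_ae (Filter.Eventually.of_forall fun y => ?_)
      simp [abs_mul]
    -- r-direction bound
    have hu2 : ContDiff ℝ (⊤ : ℕ∞) (fun x => (f (x,z))^2 * w x) :=
      ((hf.comp (contDiff_id.prodMk (contDiff_const (c := z)))).pow 2).mul hw_cd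
    have hs2 : HasCompactSupport (fun x => (f (x,z))^2 * w x) := by
      apply HasCompactSupport.intro (isCompact_Icc (a := -R) (b := R))
      intro x hx
      have hx' : R < |x| := by
        rw [lt_abs]
        simp only [mem_Icc, not_and_or, not_le] at hx
        rcases hx with h | h
        · right; linarith
        · left; exact h
      simp [hf0 (x,z) (Or.inl hx')]
    have hd2 : ∀ x : ℝ, HasDerivAt (fun x' => (f (x',z))^2 * w x')
        (2 * f (x,z) * fr (x,z) * w x + (f (x,z))^2 * (4*x/((1+x^2)^2))) x := by
      intro x
      have h1 := ((hd_r x z).fun_pow 2).fun_mul (hw_deriv x)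
      refine h1.congr_deriv ?_
      push_cast; ring
    have hQb : (f (r,z))^2 * (φ r * r^2) ≤ Q z := by
      have h2 : (f (r,z))^2 * (φ r * r^2) ≤ (f (r,z))^2 * w r :=
        mul_le_mul_of_nonneg_left (hφw r hr) (sq_nonneg _)
      have h3 := aux_ftc_right _ hu2 hs2 hr
      have hintd : IntegrableOn (fun y => |deriv (fun x => (f (x,z))^2 * w x) y|)
          (Ioi (0:ℝ)) := by
        have hcsd : HasCompactSupport (fun y => |deriv (fun x => (f (x,z))^2 * w x) y|) := by
          apply HasCompactSupport.mono hs2.deriv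
          intro y hy
          simp only [Function.mem_support, ne_eq, abs_eq_zero] at hy ⊢
          exact hy
        exact (((hu2.continuous_deriv (by simp)).abs).integrable_of_hasCompactSupport
          hcsd).integrableOn
      have hintr : IntegrableOn (fun ρ => (2* |f (ρ,z)| * |fr (ρ,z)| + 4*(f (ρ,z))^2)*ρ)
          (Ioi (0:ℝ)) := by
        have hcont : Continuous (fun ρ => (2* |f (ρ,z)| * |fr (ρ,z)| + 4*(f (ρ,z))^2)*ρ) := by
          have hc1 : Continuous (fun ρ : ℝ => f (ρ, z)) :=
            hfcont.comp (continuous_id.prodMk continuous_const)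
          have hc2 : Continuous (fun ρ : ℝ => fr (ρ, z)) :=
            hfr_cont.comp (continuous_id.prodMk continuous_const)
          exact (((continuous_const.mul hc1.abs).mul hc2.abs).add
            (continuous_const.mul (hc1.pow 2))).mul continuous_id
        have hcs : HasCompactSupport (fun ρ => (2* |f (ρ,z)| * |fr (ρ,z)| + 4*(f (ρ,z))^2)*ρ) := by
          apply HasCompactSupport.intro (isCompact_Icc (a := -R) (b := R))
          intro x hx
          have hx' : R < |x| := by
            rw [lt_abs]
            simp only [mem_Icc, not_and_or, not_le] at hx
            rcases hx with h | h
            · right; linarith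
            · left; exact h
          have h5 := hf0 (x,z) (Or.inl hx')
          have h6 : fr (x,z) = 0 := by simp [hfr_def, hfderiv0 (x,z) (Or.inl hx')]
          simp [h5, h6]
        exact (hcont.integrable_of_hasCompactSupport hcs).integrableOn
      have h4 : (∫ y in Ioi (0:ℝ), |deriv (fun x => (f (x,z))^2 * w x) y|) ≤ Q z := by
        simp only [hQ_def]
        apply setIntegral_mono_on hintd hintr measurableSet_Ioi
        intro ρ hρ
        have hρ0 : 0 < ρ := hρ
        rw [(hd2 ρ).deriv]
        calc |2 * f (ρ,z) * fr (ρ,z) * w ρ + (f (ρ,z))^2 * (4*ρ/((1+ρ^2)^2))|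
            ≤ |2 * f (ρ,z) * fr (ρ,z) * w ρ| + |(f (ρ,z))^2 * (4*ρ/((1+ρ^2)^2))| :=
              abs_add_le _ _
          _ = 2* |f (ρ,z)| * |fr (ρ,z)| *w ρ + (f (ρ,z))^2 * |4*ρ/((1+ρ^2)^2)| := by
              rw [abs_mul, abs_mul, abs_mul, abs_two, abs_of_nonneg (hw0 ρ),
                abs_mul, abs_of_nonneg (sq_nonneg (f (ρ,z)))]
          _ ≤ 2* |f (ρ,z)| * |fr (ρ,z)| *ρ + (f (ρ,z))^2 * (4*ρ) :=
              add_le_add (mul_le_mul_of_nonneg_left (hw_le ρ hρ0) (by positivity))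
                (mul_le_mul_of_nonneg_left (hW_bound ρ hρ0) (sq_nonneg _))
          _ = (2* |f (ρ,z)| * |fr (ρ,z)| + 4*(f (ρ,z))^2)*ρ := by ring
      calc (f (r,z))^2 * (φ r * r^2) ≤ (f (r,z))^2 * w r := h2
        _ ≤ ∫ y in Ioi (0:ℝ), |deriv (fun x => (f (x,z))^2 * w x) y| := h3
        _ ≤ Q z := h4
    -- combine
    have hH0 : 0 ≤ H r := by
      simp only [hH_def]
      exact integral_nonneg fun y => by positivity
    have e : (f (r,z))^4 * φ r * r^3 = ((f (r,z))^2 * r) * ((f (r,z))^2 * (φ r * r^2)) := by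
      ring
    rw [e]
    have hφr0 := (hφ01 r).1
    exact mul_le_mul (mul_le_mul_of_nonneg_right hab hr.le) hQb
      (by positivity) (by positivity)
  -- 2D integrands
  have hcf1 : Continuous (fun p : ℝ × ℝ => (f p)^2 * p.1) := (hfcont.pow 2).mul continuous_fst
  have hsf1 : HasCompactSupport (fun p : ℝ × ℝ => (f p)^2 * p.1) :=
    hsupp_of _ (fun p hp => by simp [(hzero_out p hp).1])
  have hI1 : Integrable (fun p : ℝ × ℝ => (f p)^2 * p.1) ν := hInt _ hcf1 hsf1
  have hI2 : Integrable (fun p : ℝ × ℝ => (fr p)^2 * p.1) ν :=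
    hInt _ ((hfr_cont.pow 2).mul continuous_fst)
      (hsupp_of _ (fun p hp => by simp [(hzero_out p hp).2.1]))
  have hI3 : Integrable (fun p : ℝ × ℝ => (fz p)^2 * p.1) ν :=
    hInt _ ((hfz_cont.pow 2).mul continuous_fst)
      (hsupp_of _ (fun p hp => by simp [(hzero_out p hp).2.2]))
  have hI4 : Integrable (fun p : ℝ × ℝ => (f p)^4 * φ p.1 * p.1^3) ν :=
    hInt _ (((hfcont.pow 4).mul (hφ.continuous.comp continuous_fst)).mul
      (continuous_fst.pow 3))
      (hsupp_of _ (fun p hp => by simp [(hzero_out p hp).1]))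
  have hI5 : Integrable (fun p : ℝ × ℝ => 2 * |f p| * |fz p| * p.1) ν :=
    hInt _ (((continuous_const.mul hfcont.abs).mul hfz_cont.abs).mul continuous_fst)
      (hsupp_of _ (fun p hp => by simp [(hzero_out p hp).1]))
  have hI5' : Integrable (fun p : ℝ × ℝ => 2 * |f p| * |fr p| * p.1) ν :=
    hInt _ (((continuous_const.mul hfcont.abs).mul hfr_cont.abs).mul continuous_fst)
      (hsupp_of _ (fun p hp => by simp [(hzero_out p hp).1]))
  have hI1'' : Integrable (fun p : ℝ × ℝ => 4 * (f p)^2 * p.1) ν :=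
    hInt _ ((continuous_const.mul (hfcont.pow 2)).mul continuous_fst)
      (hsupp_of _ (fun p hp => by simp [(hzero_out p hp).1]))
  have hI6 : Integrable (fun p : ℝ × ℝ => (2 * |f p| * |fr p| + 4 * (f p)^2) * p.1) ν := by
    have : (fun p : ℝ × ℝ => (2 * |f p| * |fr p| + 4 * (f p)^2) * p.1)
        = fun p : ℝ × ℝ => 2 * |f p| * |fr p| * p.1 + 4 * (f p)^2 * p.1 := by
      funext p; ring
    rw [this]; exact hI5'.add hI1''
  -- abbreviations for the product-measure integrals
  set A' : ℝ := ∫ p : ℝ × ℝ, (f p)^2 * p.1 ∂ν with hA'_def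
  set B' : ℝ := ∫ p : ℝ × ℝ, (fr p)^2 * p.1 ∂ν with hB'_def
  set D' : ℝ := ∫ p : ℝ × ℝ, (fz p)^2 * p.1 ∂ν with hD'_def
  have hA'0 : 0 ≤ A' := integral_nonneg_of_ae (hae.mono fun p hp => by positivity)
  have hB'0 : 0 ≤ B' := integral_nonneg_of_ae (hae.mono fun p hp => by positivity)
  have hD'0 : 0 ≤ D' := integral_nonneg_of_ae (hae.mono fun p hp => by positivity)
  -- Fubini for Q
  have C0def : (∫ z : ℝ, Q z) = ∫ p : ℝ × ℝ, (2 * |f p| * |fr p| + 4 * (f p)^2) * p.1 ∂ν := by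
    rw [hQ_def]
    exact (integral_prod_symm _ hI6).symm
  have hQint : Integrable Q volume := by
    rw [hQ_def]
    exact hI6.integral_prod_right
  -- step 2 : integrate in z
  have step2 : ∀ r : ℝ, 0 < r →
      (∫ z : ℝ, (f (r,z))^4 * φ r * r^3) ≤ (H r * r) * ∫ z : ℝ, Q z := by
    intro r hr
    have hL : Integrable (fun z => (f (r,z))^4 * φ r * r^3) volume := by
      have hcont : Continuous (fun z => (f (r,z))^4 * φ r * r^3) :=
        (((hfcont.comp (continuous_const.prodMk continuous_id)).pow 4).mul
          continuous_const).mul continuous_const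
      have hcs : HasCompactSupport (fun z => (f (r,z))^4 * φ r * r^3) := by
        apply HasCompactSupport.intro (isCompact_Icc (a := -R) (b := R))
        intro y hy
        have hy' : R < |y| := by
          rw [lt_abs]
          simp only [mem_Icc, not_and_or, not_le] at hy
          rcases hy with h | h
          · right; linarith
          · left; exact h
        simp [hf0 (r,y) (Or.inr hy')]
      exact hcont.integrable_of_hasCompactSupport hcs
    have hRint : Integrable (fun z => (H r * r) * Q z) volume := hQint.const_mul _
    have h := integral_mono hL hRint (fun z => key r hr z)
    rw [integral_const_mul] at h
    exact h
  have hHr_eq : ∀ r : ℝ, H r * r = ∫ z : ℝ, 2 * |f (r,z)| * |fz (r,z)| * r := by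
    intro r
    simp only [hH_def]
    exact (integral_mul_const r _).symm
  -- step 3 : integrate in r
  have step3 : (∫ r in Ioi (0:ℝ), ∫ z : ℝ, (f (r,z))^4 * φ r * r^3)
      ≤ (∫ p : ℝ × ℝ, 2 * |f p| * |fz p| * p.1 ∂ν) * (∫ z : ℝ, Q z) := by
    have hM1 : Integrable (fun r => ∫ z : ℝ, (f (r,z))^4 * φ r * r^3) μ1 :=
      hI4.integral_prod_left
    have h5 : Integrable (fun r => ∫ z : ℝ, 2 * |f (r,z)| * |fz (r,z)| * r) μ1 :=
      hI5.integral_prod_left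
    have hM2 : Integrable (fun r => (H r * r) * (∫ z : ℝ, Q z)) μ1 := by
      have he : (fun r => (H r * r) * (∫ z : ℝ, Q z))
          = fun r => (∫ z : ℝ, 2 * |f (r,z)| * |fz (r,z)| * r) * (∫ z : ℝ, Q z) := by
        funext r; rw [hHr_eq r]
      rw [he]
      exact h5.mul_const _
    have hmono : (fun r => ∫ z : ℝ, (f (r,z))^4 * φ r * r^3)
        ≤ᵐ[μ1] (fun r => (H r * r) * (∫ z : ℝ, Q z)) := by
      rw [hμ1]
      exact (ae_restrict_mem measurableSet_Ioi).mono fun r hr => step2 r hr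
    have h := integral_mono_ae hM1 hM2 hmono
    calc (∫ r in Ioi (0:ℝ), ∫ z : ℝ, (f (r,z))^4 * φ r * r^3)
        = ∫ r, (∫ z : ℝ, (f (r,z))^4 * φ r * r^3) ∂μ1 := by rw [hμ1]
      _ ≤ ∫ r, (H r * r) * (∫ z : ℝ, Q z) ∂μ1 := h
      _ = (∫ r, H r * r ∂μ1) * (∫ z : ℝ, Q z) := integral_mul_const _ _
      _ = (∫ r, (∫ z : ℝ, 2 * |f (r,z)| * |fz (r,z)| * r) ∂μ1) * (∫ z : ℝ, Q z) := by
          congr 1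
          exact integral_congr_ae (Filter.Eventually.of_forall fun r => hHr_eq r)
      _ = (∫ p : ℝ × ℝ, 2 * |f p| * |fz p| * p.1 ∂ν) * (∫ z : ℝ, Q z) := by
          congr 1
          exact (integral_prod _ hI5).symm
  -- Cauchy-Schwarz bounds
  have hsqrt_cont : Continuous (fun p : ℝ × ℝ => Real.sqrt p.1) :=
    Real.continuous_sqrt.comp continuous_fst
  have cs_gen : ∀ g : ℝ × ℝ → ℝ, Continuous g → (∀ p : ℝ × ℝ, p ∉ tsupport f → g p = 0) →
      (∫ p : ℝ × ℝ, 2 * |f p| * |g p| * p.1 ∂ν)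
        ≤ 2 * Real.sqrt A' * Real.sqrt (∫ p : ℝ × ℝ, (g p)^2 * p.1 ∂ν) := by
    intro g hgc hg0
    have hm1 : MemLp (fun p : ℝ × ℝ => |f p| * Real.sqrt p.1) 2 ν :=
      hMem _ (hfcont.abs.mul hsqrt_cont)
        (hsupp_of _ (fun p hp => by simp [image_eq_zero_of_notMem_tsupport hp]))
    have hm2 : MemLp (fun p : ℝ × ℝ => |g p| * Real.sqrt p.1) 2 ν :=
      hMem _ (hgc.abs.mul hsqrt_cont)
        (hsupp_of _ (fun p hp => by simp [hg0 p hp]))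
    have hcs := aux_cs _ _ hm1 hm2 (fun p => by positivity) (fun p => by positivity)
    have e1 : (∫ p : ℝ × ℝ, 2 * |f p| * |g p| * p.1 ∂ν)
        = 2 * ∫ p : ℝ × ℝ, (|f p| * Real.sqrt p.1) * (|g p| * Real.sqrt p.1) ∂ν := by
      rw [← integral_const_mul]
      refine integral_congr_ae (hae.mono fun p hp => ?_)
      have hs : Real.sqrt p.1 * Real.sqrt p.1 = p.1 := Real.mul_self_sqrt hp.le
      linear_combination (-(2 * |f p| * |g p|)) * hs
    have e2 : (∫ p : ℝ × ℝ, (|f p| * Real.sqrt p.1) ^ 2 ∂ν) = A' := by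
      rw [hA'_def]
      refine integral_congr_ae (hae.mono fun p hp => ?_)
      simp [mul_pow, sq_abs, Real.sq_sqrt hp.le]
    have e3 : (∫ p : ℝ × ℝ, (|g p| * Real.sqrt p.1) ^ 2 ∂ν)
        = ∫ p : ℝ × ℝ, (g p)^2 * p.1 ∂ν := by
      refine integral_congr_ae (hae.mono fun p hp => ?_)
      simp [mul_pow, sq_abs, Real.sq_sqrt hp.le]
    rw [e2, e3] at hcs
    calc (∫ p : ℝ × ℝ, 2 * |f p| * |g p| * p.1 ∂ν)
        = 2 * ∫ p : ℝ × ℝ, (|f p| * Real.sqrt p.1) * (|g p| * Real.sqrt p.1) ∂ν := e1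
      _ ≤ 2 * (Real.sqrt A' * Real.sqrt (∫ p : ℝ × ℝ, (g p)^2 * p.1 ∂ν)) := by
          have := mul_le_mul_of_nonneg_left hcs (by norm_num : (0:ℝ) ≤ 2)
          linarith
      _ = 2 * Real.sqrt A' * Real.sqrt (∫ p : ℝ × ℝ, (g p)^2 * p.1 ∂ν) := by ring
  have csD : (∫ p : ℝ × ℝ, 2 * |f p| * |fz p| * p.1 ∂ν)
      ≤ 2 * Real.sqrt A' * Real.sqrt D' := by
    have := cs_gen fz hfz_cont (fun p hp => (hzero_out p hp).2.2)
    rw [hD'_def]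
    exact this
  have csB : (∫ p : ℝ × ℝ, 2 * |f p| * |fr p| * p.1 ∂ν)
      ≤ 2 * Real.sqrt A' * Real.sqrt B' := by
    have := cs_gen fr hfr_cont (fun p hp => (hzero_out p hp).2.1)
    rw [hB'_def]
    exact this
  have hQle : (∫ z : ℝ, Q z) ≤ 2 * Real.sqrt A' * Real.sqrt B' + 4 * A' := by
    rw [C0def]
    have hsplit : (∫ p : ℝ × ℝ, (2 * |f p| * |fr p| + 4 * (f p)^2) * p.1 ∂ν)
        = (∫ p : ℝ × ℝ, 2 * |f p| * |fr p| * p.1 ∂ν)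
          + ∫ p : ℝ × ℝ, 4 * (f p)^2 * p.1 ∂ν := by
      rw [← integral_add hI5' hI1'']
      refine integral_congr_ae (Filter.Eventually.of_forall fun p => ?_)
      ring
    have h4A : (∫ p : ℝ × ℝ, 4 * (f p)^2 * p.1 ∂ν) = 4 * A' := by
      rw [hA'_def, ← integral_const_mul]
      refine integral_congr_ae (Filter.Eventually.of_forall fun p => ?_)
      ring
    rw [hsplit, h4A]
    linarith [csB]
  have hQ0 : 0 ≤ ∫ z : ℝ, Q z := by
    rw [C0def]
    exact integral_nonneg_of_ae (hae.mono fun p hp => by positivity)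
  have final : (∫ r in Ioi (0:ℝ), ∫ z : ℝ, (f (r,z))^4 * φ r * r^3)
      ≤ 8 * Real.sqrt A' * (Real.sqrt A' + Real.sqrt B') * Real.sqrt D' * Real.sqrt A' := by
    have h1 := step3.trans (mul_le_mul csD hQle hQ0 (by positivity))
    have ha := Real.sqrt_nonneg A'
    have hb := Real.sqrt_nonneg B'
    have hd := Real.sqrt_nonneg D'
    have hsq : Real.sqrt A' * Real.sqrt A' = A' := Real.mul_self_sqrt hA'0
    have e : 2 * Real.sqrt A' * Real.sqrt D' * (2 * Real.sqrt A' * Real.sqrt B' + 4 * A')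
        = 4 * A' * Real.sqrt B' * Real.sqrt D' + 8 * A' * Real.sqrt A' * Real.sqrt D' := by
      linear_combination (4 * Real.sqrt B' * Real.sqrt D') * hsq
    have e2 : 8 * Real.sqrt A' * (Real.sqrt A' + Real.sqrt B') * Real.sqrt D' * Real.sqrt A'
        = 8 * A' * Real.sqrt A' * Real.sqrt D' + 8 * A' * Real.sqrt B' * Real.sqrt D' := by
      linear_combination (8 * Real.sqrt D' * (Real.sqrt A' + Real.sqrt B')) * hsq
    rw [e] at h1
    rw [e2]
    have h3 : 0 ≤ A' * Real.sqrt B' * Real.sqrt D' := by positivity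
    linarith
  have eA' : A' = ∫ r in Ioi (0:ℝ), ∫ z : ℝ, (f (r, z))^2 * r :=
    hA'_def.trans (integral_prod _ hI1)
  have eB' : B' = ∫ r in Ioi (0:ℝ), ∫ z : ℝ, (fr (r, z))^2 * r :=
    hB'_def.trans (integral_prod _ hI2)
  have eD' : D' = ∫ r in Ioi (0:ℝ), ∫ z : ℝ, (fz (r, z))^2 * r :=
    hD'_def.trans (integral_prod _ hI3)
  -- conclusion
  have goal_eq : 8 * Real.sqrt A' * (Real.sqrt A' + Real.sqrt B') * Real.sqrt D' * Real.sqrt A'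
      = 8 * (∫ r in Set.Ioi (0:ℝ), ∫ z : ℝ, (f (r, z))^2 * r).sqrt
          * ((∫ r in Set.Ioi (0:ℝ), ∫ z : ℝ, (f (r, z))^2 * r).sqrt
              + (∫ r in Set.Ioi (0:ℝ), ∫ z : ℝ, (fr (r, z))^2 * r).sqrt)
          * (∫ r in Set.Ioi (0:ℝ), ∫ z : ℝ, (fz (r, z))^2 * r).sqrt
          * (∫ r in Set.Ioi (0:ℝ), ∫ z : ℝ, (f (r, z))^2 * r).sqrt := by
    rw [eA', eB', eD']
  exact final.trans_eq goal_eq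
end

section
/- For every u in the Schwartz class on ℝ³, ‖u‖_{L^∞(ℝ³)} ≤ C ‖u‖_{Ḣ¹(ℝ³)}^{1/2} ‖u‖_{Ḣ²(ℝ³)}^{1/2} for a universal constant C. -/
/-!
By Fourier inversion, `|u x| ≤ ∫ |û|`. For `t > 0` the weight `w_t ξ = t |ξ|² + t⁻¹ |ξ|⁴` on a
three-dimensional space satisfies `∫ w_t⁻¹ = (3/2) π |B₁|` independently of `t`: in polar
coordinates it becomes `∫₀^∞ (t + t⁻¹ r²)⁻¹ dr = π/2`. Cauchy–Schwarz against `w_t` gives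
`(∫ |û|)² ≤ (3/2) π |B₁| (t ‖u‖²_{Ḣ¹} + t⁻¹ ‖u‖²_{Ḣ²})`, and optimising in `t` yields the
inequality with `C = √(3 π |B₁|) = 2π`.
-/

open MeasureTheory Real FourierTransform Set Metric Filter Topology

lemma le_two_mul_sqrt_mul_of_forall_le {X A B : ℝ} (hA : 0 ≤ A) (hB : 0 ≤ B)
    (h : ∀ t > 0, X ≤ t * A + B / t) : X ≤ 2 * √(A * B) := by
  have hlim : Tendsto (fun ε => 2 * √((A + ε) * (B + ε))) (𝓝[>] 0) (𝓝 (2 * √(A * B))) :=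
    tendsto_nhdsWithin_of_tendsto_nhds (by simpa using (by fun_prop :
      Continuous fun ε => 2 * √((A + ε) * (B + ε))).tendsto 0)
  refine ge_of_tendsto hlim (eventually_nhdsWithin_of_forall fun ε (hε : 0 < ε) => ?_)
  have hp : 0 < √(A + ε) := sqrt_pos.2 (by linarith)
  have hq : 0 < √(B + ε) := sqrt_pos.2 (by linarith)
  calc X ≤ √(B + ε) / √(A + ε) * A + B / (√(B + ε) / √(A + ε)) := h _ (div_pos hq hp)
    _ ≤ √(B + ε) / √(A + ε) * √(A + ε) ^ 2 + √(B + ε) ^ 2 / (√(B + ε) / √(A + ε)) := by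
      rw [sq_sqrt (by linarith), sq_sqrt (by linarith)]
      gcongr <;> linarith
    _ = 2 * √((A + ε) * (B + ε)) := by
      rw [sqrt_mul (by linarith)]
      field_simp
      ring

section WeightedCauchySchwarz

variable {α F : Type*} [MeasurableSpace α] {μ : Measure α} [NormedAddCommGroup F]

lemma integral_norm_le_sqrt_integral_inv_mul_integral_mul_sq {g : α → F} {w : α → ℝ}
    (hg : AEStronglyMeasurable g μ) (hw : ∀ᵐ x ∂μ, 0 < w x)
    (hw_inv : Integrable (fun x => (w x)⁻¹) μ) (hwg : Integrable (fun x => w x * ‖g x‖ ^ 2) μ) :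
    ∫ x, ‖g x‖ ∂μ ≤ √((∫ x, (w x)⁻¹ ∂μ) * ∫ x, w x * ‖g x‖ ^ 2 ∂μ) := by
  -- AM-GM, since the two terms multiply to `‖g x‖ ^ 2`
  have amgm : ∀ t > 0, ∀ᵐ x ∂μ, 2 * ‖g x‖ ≤ t * (w x)⁻¹ + w x * ‖g x‖ ^ 2 / t := by
    intro t ht
    filter_upwards [hw] with x hx
    have hprod : t * (w x)⁻¹ * (w x * ‖g x‖ ^ 2 / t) = ‖g x‖ ^ 2 := by field_simp
    have h1 : 0 ≤ t * (w x)⁻¹ := by positivity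
    have h2 : 0 ≤ w x * ‖g x‖ ^ 2 / t := by positivity
    nlinarith [sq_nonneg (t * (w x)⁻¹ - w x * ‖g x‖ ^ 2 / t), norm_nonneg (g x)]
  have hint : Integrable (fun x => ‖g x‖) μ := by
    refine ((hw_inv.add hwg).div_const 2).mono' hg.norm ((amgm 1 one_pos).mono fun x hx => ?_)
    simp only [Pi.add_apply, norm_norm, one_mul, div_one] at hx ⊢
    linarith
  have hP : 0 ≤ ∫ x, (w x)⁻¹ ∂μ := integral_nonneg_of_ae (hw.mono fun x hx => by positivity)
  have hQ : 0 ≤ ∫ x, w x * ‖g x‖ ^ 2 ∂μ :=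
    integral_nonneg_of_ae (hw.mono fun x hx => by positivity)
  have := le_two_mul_sqrt_mul_of_forall_le (X := 2 * ∫ x, ‖g x‖ ∂μ) hP hQ fun t ht => by
    rw [← integral_const_mul, ← integral_const_mul, ← integral_div,
      ← integral_add (hw_inv.const_mul t) (hwg.div_const t)]
    exact integral_mono_ae (hint.const_mul 2) ((hw_inv.const_mul t).add (hwg.div_const t))
      (amgm t ht)
  linarith

end WeightedCauchySchwarz

lemma inv_add_mul_sq_eq {a b : ℝ} (ha : 0 < a) (hb : 0 < b) (r : ℝ) :
    (a + b * r ^ 2)⁻¹ = a⁻¹ * (1 + (√(b / a) * r) ^ 2)⁻¹ := by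
  rw [mul_pow, sq_sqrt (by positivity), ← mul_inv]
  field_simp

lemma integrableOn_Ioi_inv_add_mul_sq {a b : ℝ} (ha : 0 < a) (hb : 0 < b) :
    IntegrableOn (fun r : ℝ => (a + b * r ^ 2)⁻¹) (Ioi 0) := by
  have := (integrableOn_Ioi_comp_mul_left_iff (fun s : ℝ => (1 + s ^ 2)⁻¹) 0
    (sqrt_pos.2 (div_pos hb ha))).2 integrable_inv_one_add_sq.integrableOn
  simp_rw [inv_add_mul_sq_eq ha hb]
  exact this.const_mul a⁻¹

lemma integral_Ioi_inv_add_mul_sq {a b : ℝ} (ha : 0 < a) (hb : 0 < b) :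
    ∫ r in Ioi (0 : ℝ), (a + b * r ^ 2)⁻¹ = π / (2 * √(a * b)) := by
  have hc : 0 < √(b / a) := sqrt_pos.2 (div_pos hb ha)
  simp_rw [inv_add_mul_sq_eq ha hb]
  rw [integral_const_mul, integral_comp_mul_left_Ioi (fun s : ℝ => (1 + s ^ 2)⁻¹) 0 hc, mul_zero,
    integral_Ioi_inv_one_add_sq, arctan_zero, sub_zero, smul_eq_mul,
    show a * b = a ^ 2 * (b / a) by field_simp, sqrt_mul (by positivity), sqrt_sq ha.le]
  field_simp

section HaarMeasure

variable {E : Type*} [NormedAddCommGroup E] [NormedSpace ℝ E] [FiniteDimensional ℝ E]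
  [MeasurableSpace E] [BorelSpace E] (μ : Measure E) [μ.IsAddHaarMeasure]

lemma eqOn_sq_mul_inv_mul_sq_add_mul_pow_four {a b : ℝ} :
    EqOn (fun r : ℝ => r ^ 2 * (a * r ^ 2 + b * r ^ 4)⁻¹) (fun r => (a + b * r ^ 2)⁻¹)
      (Ioi 0) := by
  intro r (hr : 0 < r)
  dsimp only
  rw [show a * r ^ 2 + b * r ^ 4 = r ^ 2 * (a + b * r ^ 2) by ring, mul_inv,
    ← mul_assoc, mul_inv_cancel₀ (by positivity), one_mul]

lemma integrable_inv_mul_norm_sq_add_mul_norm_pow_four (hE : Module.finrank ℝ E = 3)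
    {a b : ℝ} (ha : 0 < a) (hb : 0 < b) :
    Integrable (fun ξ : E => (a * ‖ξ‖ ^ 2 + b * ‖ξ‖ ^ 4)⁻¹) μ := by
  have : Nontrivial E := Module.nontrivial_of_finrank_eq_succ hE
  rw [integrable_fun_norm_addHaar μ (f := fun r => (a * r ^ 2 + b * r ^ 4)⁻¹), hE]
  simp only [Nat.reduceSub, smul_eq_mul]
  rw [integrableOn_congr_fun eqOn_sq_mul_inv_mul_sq_add_mul_pow_four measurableSet_Ioi]
  exact integrableOn_Ioi_inv_add_mul_sq ha hb

lemma integral_inv_mul_norm_sq_add_mul_norm_pow_four (hE : Module.finrank ℝ E = 3)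
    {a b : ℝ} (ha : 0 < a) (hb : 0 < b) :
    ∫ ξ : E, (a * ‖ξ‖ ^ 2 + b * ‖ξ‖ ^ 4)⁻¹ ∂μ = 3 * μ.real (ball 0 1) * π / (2 * √(a * b)) := by
  have : Nontrivial E := Module.nontrivial_of_finrank_eq_succ hE
  rw [integral_fun_norm_addHaar μ (fun r => (a * r ^ 2 + b * r ^ 4)⁻¹), hE]
  simp only [Nat.reduceSub, smul_eq_mul, nsmul_eq_mul, Nat.cast_ofNat]
  rw [setIntegral_congr_fun measurableSet_Ioi eqOn_sq_mul_inv_mul_sq_add_mul_pow_four,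
    integral_Ioi_inv_add_mul_sq ha hb]
  ring

variable {F : Type*} [NormedAddCommGroup F]

lemma sq_integral_norm_le_sqrt_integral_sq_mul_integral_pow_four
    (hE : Module.finrank ℝ E = 3) {g : E → F} (hg : AEStronglyMeasurable g μ)
    (h2 : Integrable (fun ξ => ‖ξ‖ ^ 2 * ‖g ξ‖ ^ 2) μ)
    (h4 : Integrable (fun ξ => ‖ξ‖ ^ 4 * ‖g ξ‖ ^ 2) μ) :
    (∫ ξ, ‖g ξ‖ ∂μ) ^ 2 ≤ 3 * π * μ.real (ball 0 1) *
      √((∫ ξ, ‖ξ‖ ^ 2 * ‖g ξ‖ ^ 2 ∂μ) * ∫ ξ, ‖ξ‖ ^ 4 * ‖g ξ‖ ^ 2 ∂μ) := by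
  have : Nontrivial E := Module.nontrivial_of_finrank_eq_succ hE
  set A := ∫ ξ, ‖ξ‖ ^ 2 * ‖g ξ‖ ^ 2 ∂μ
  set B := ∫ ξ, ‖ξ‖ ^ 4 * ‖g ξ‖ ^ 2 ∂μ
  set K := 3 * μ.real (ball 0 1) * π / 2 with hK
  have hA : 0 ≤ A := integral_nonneg fun ξ => by positivity
  have hB : 0 ≤ B := integral_nonneg fun ξ => by positivity
  have hK0 : 0 ≤ K := by positivity
  have hscale : ∀ t > 0, (∫ ξ, ‖g ξ‖ ∂μ) ^ 2 ≤ t * (K * A) + K * B / t := by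
    intro t ht
    have hw_inv := integrable_inv_mul_norm_sq_add_mul_norm_pow_four μ hE ht (inv_pos.2 ht)
    have hw_int : ∫ ξ, (t * ‖ξ‖ ^ 2 + t⁻¹ * ‖ξ‖ ^ 4)⁻¹ ∂μ = K := by
      rw [integral_inv_mul_norm_sq_add_mul_norm_pow_four μ hE ht (inv_pos.2 ht),
        mul_inv_cancel₀ ht.ne', sqrt_one]
      ring
    have hwg_eq : (fun ξ => (t * ‖ξ‖ ^ 2 + t⁻¹ * ‖ξ‖ ^ 4) * ‖g ξ‖ ^ 2)
        = fun ξ => t * (‖ξ‖ ^ 2 * ‖g ξ‖ ^ 2) + t⁻¹ * (‖ξ‖ ^ 4 * ‖g ξ‖ ^ 2) := by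
      ext ξ; ring
    have hwg : Integrable (fun ξ => (t * ‖ξ‖ ^ 2 + t⁻¹ * ‖ξ‖ ^ 4) * ‖g ξ‖ ^ 2) μ := by
      rw [hwg_eq]; exact (h2.const_mul t).add (h4.const_mul t⁻¹)
    have hw_pos : ∀ᵐ ξ ∂μ, 0 < t * ‖ξ‖ ^ 2 + t⁻¹ * ‖ξ‖ ^ 4 := by
      filter_upwards [compl_mem_ae_iff.2 (measure_singleton (0 : E))] with ξ hξ
      have : 0 < ‖ξ‖ := norm_pos_iff.2 hξ
      positivity
    have hCS := integral_norm_le_sqrt_integral_inv_mul_integral_mul_sq hg hw_pos hw_inv hwg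
    rw [hw_int, hwg_eq, integral_add (h2.const_mul t) (h4.const_mul t⁻¹), integral_const_mul,
      integral_const_mul] at hCS
    calc (∫ ξ, ‖g ξ‖ ∂μ) ^ 2 ≤ K * (t * A + t⁻¹ * B) :=
          (le_sqrt (integral_nonneg fun ξ => norm_nonneg _) (mul_nonneg hK0 (add_nonneg
            (mul_nonneg ht.le hA) (mul_nonneg (inv_nonneg.2 ht.le) hB)))).1 hCS
      _ = t * (K * A) + K * B / t := by ring
  calc (∫ ξ, ‖g ξ‖ ∂μ) ^ 2 ≤ 2 * √(K * A * (K * B)) :=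
        le_two_mul_sqrt_mul_of_forall_le (by positivity) (by positivity) hscale
    _ = 3 * π * μ.real (ball 0 1) * √(A * B) := by
      rw [show K * A * (K * B) = K ^ 2 * (A * B) by ring, sqrt_mul (sq_nonneg K), sqrt_sq hK0, hK]
      ring

end HaarMeasure

lemma SchwartzMap.norm_le_integral_norm_fourier {V E : Type*} [NormedAddCommGroup V]
    [InnerProductSpace ℝ V] [FiniteDimensional ℝ V] [MeasurableSpace V] [BorelSpace V]
    [NormedAddCommGroup E] [NormedSpace ℂ E] [CompleteSpace E] (f : SchwartzMap V E) (x : V) :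
    ‖f x‖ ≤ ∫ ξ, ‖𝓕 (f : V → E) ξ‖ := by
  conv_lhs => rw [← FourierPair.fourierInv_fourier_eq (F := SchwartzMap V E) f, fourierInv_coe,
    fourier_coe, Real.fourierInv_eq]
  refine (norm_integral_le_integral_norm _).trans_eq ?_
  simp_rw [Circle.norm_smul]

lemma SchwartzMap.integrable_pow_mul_norm_sq {D V : Type*} [NormedAddCommGroup D]
    [NormedSpace ℝ D] [MeasurableSpace D] [BorelSpace D] [SecondCountableTopology D]
    [NormedAddCommGroup V] [NormedSpace ℝ V] (μ : Measure D) [μ.HasTemperateGrowth] (f : SchwartzMap D V) (k : ℕ) :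
    Integrable (fun x => ‖x‖ ^ k * ‖f x‖ ^ 2) μ := by
  have := (f.integrable_pow_mul μ k).mul_bdd f.continuous.norm.aestronglyMeasurable
    (Eventually.of_forall fun x => (norm_norm (f x)).trans_le (f.norm_le_seminorm ℝ x))
  simpa only [mul_assoc, ← sq] using this

/-- 3-D Agmon-type inequality: ‖u‖_{L^∞} ≤ C ‖u‖_{Ḣ¹}^{1/2} ‖u‖_{Ḣ²}^{1/2}. -/
theorem stmt_4 :
    ∃ C : ℝ, 0 < C ∧
    ∀ u : SchwartzMap (EuclideanSpace ℝ (Fin 3)) ℝ, ∀ x : EuclideanSpace ℝ (Fin 3),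
      |u x| ≤ C * (∫ ξ : EuclideanSpace ℝ (Fin 3), ‖ξ‖^2 * ‖𝓕 (fun y => (u y : ℂ)) ξ‖^2) ^ ((1:ℝ)/4)
              * (∫ ξ : EuclideanSpace ℝ (Fin 3), ‖ξ‖^4 * ‖𝓕 (fun y => (u y : ℂ)) ξ‖^2) ^ ((1:ℝ)/4) := by
  refine ⟨2 * π, by positivity, fun u x => ?_⟩
  set v := SchwartzMap.postcompCLM (𝕜 := ℝ) Complex.ofRealCLM u
  have hv : 𝓕 (fun y => (u y : ℂ)) = 𝓕 (v : EuclideanSpace ℝ (Fin 3) → ℂ) := rfl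
  rw [hv, ← SchwartzMap.fourier_coe]
  set A := ∫ ξ, ‖ξ‖ ^ 2 * ‖𝓕 v ξ‖ ^ 2
  set B := ∫ ξ, ‖ξ‖ ^ 4 * ‖𝓕 v ξ‖ ^ 2
  have hA : 0 ≤ A := integral_nonneg fun ξ => by positivity
  have hB : 0 ≤ B := integral_nonneg fun ξ => by positivity
  have hsq : (∫ ξ, ‖𝓕 v ξ‖) ^ 2 ≤ (2 * π) ^ 2 * √(A * B) := by
    have := sq_integral_norm_le_sqrt_integral_sq_mul_integral_pow_four volume
      finrank_euclideanSpace_fin (𝓕 v).continuous.aestronglyMeasurable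
      ((𝓕 v).integrable_pow_mul_norm_sq volume 2)
      ((𝓕 v).integrable_pow_mul_norm_sq volume 4)
    rw [Measure.real, EuclideanSpace.volume_ball_fin_three, ENNReal.ofReal_one, one_pow, one_mul,
      ENNReal.toReal_ofReal (by positivity)] at this
    exact this.trans_eq (by ring)
  have hroot : ∀ y : ℝ, 0 ≤ y → √(√y) = y ^ (1 / 4 : ℝ) := fun y hy => by
    rw [sqrt_eq_rpow, sqrt_eq_rpow, ← rpow_mul hy]; norm_num
  calc |u x| = ‖v x‖ := by simp [v]
    _ ≤ ∫ ξ, ‖𝓕 v ξ‖ := by rw [SchwartzMap.fourier_coe]; exact v.norm_le_integral_norm_fourier x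
    _ ≤ √((2 * π) ^ 2 * √(A * B)) := (le_sqrt (integral_nonneg fun ξ => norm_nonneg _)
      (by positivity)).2 hsq
    _ = 2 * π * A ^ (1 / 4 : ℝ) * B ^ (1 / 4 : ℝ) := by
      rw [sqrt_mul (sq_nonneg _), sqrt_sq (by positivity), sqrt_mul hA, sqrt_mul (sqrt_nonneg A),
        hroot A hA, hroot B hB]
      ring
end
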